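/- (Section 4, formulas (⋆⋆)) Let 𝔭 = (F¹, …, F^r) be an ordered partition of I with r ≥ 2 and let 𝔮 = (F², …, F^r), an ordered partition of J = I ∖ F¹, with its data computed inside V' = span{λ_i : i ∈ J}. Set b_{F¹}^Λ = #{i ∈ F¹ : ⟨μ_i, Λ⟩ ≤ 0}. Then for every Λ ∈ V one has b_𝔭^Λ = b_{F¹}^Λ + b_𝔮^Λ and α_𝔭^Λ = α_𝔮^Λ + |F¹| + 1 + b_{F¹}^Λ. -/

import Mathlib

open scoped Classical

noncomputable section

local notation "⟪" x ", " y "⟫" => @inner ℝ _ _ x y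

/-- An ordered partition of the finite set `ttl`: a finite sequence `F 0, …, F (r-1)` of
nonempty pairwise disjoint finsets whose union is `ttl`.  (We index the parts by `Fin r`,
so the `u`-th part of the paper, `1 ≤ u ≤ r`, is `F (u-1)`.) -/
structure OrderedPartition (I : Type*) [DecidableEq I] (ttl : Finset I) where
  r : ℕ
  F : Fin r → Finset I
  nonempty : ∀ u, (F u).Nonempty
  disj : ∀ u v : Fin r, u ≠ v → Disjoint (F u) (F v)
  covers : Finset.univ.biUnion F = ttl

namespace OrderedPartition

variable {V : Type*} [NormedAddCommGroup V] [InnerProductSpace ℝ V] [FiniteDimensional ℝ V]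
variable {I : Type*} [Fintype I] [DecidableEq I] {ttl : Finset I}

/-- `E^v = F¹ ∪ ⋯ ∪ F^v` (1-indexed `v`). -/
def Epart (p : OrderedPartition I ttl) (v : ℕ) : Finset I :=
  Finset.univ.biUnion fun u : Fin p.r => if (u : ℕ) < v then p.F u else ∅

/-- The (1-indexed) index `u` of the part `F^u` containing `i` (and `0` if `i` is in no part). -/
def partIdx (p : OrderedPartition I ttl) (i : I) : ℕ :=
  ∑ u : Fin p.r, if i ∈ p.F u then (u : ℕ) + 1 else 0

/-- `U^v`, the span of `{μ_i : i ∈ E^v}`. -/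
def Uspace (p : OrderedPartition I ttl) (mu : I → V) (v : ℕ) : Submodule ℝ V :=
  Submodule.span ℝ (mu '' ↑(p.Epart v))

/-- `W^u` (1-indexed `u`), the orthogonal complement of `U^{u-1}` in `U^u`. -/
def Wspace (p : OrderedPartition I ttl) (mu : I → V) (u : ℕ) : Submodule ℝ V :=
  p.Uspace mu u ⊓ (p.Uspace mu (u - 1))ᗮ

/-- `λ_{𝔭,i}`, the orthogonal projection of `λ_i` onto `W^u` for `i ∈ F^u`. -/
def lamp (p : OrderedPartition I ttl) (lam mu : I → V) (i : I) : V :=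
  (Submodule.orthogonalProjectionOnto (p.Wspace mu (p.partIdx i)) (lam i) : V)

/-- `μ_{𝔭,i}`, the orthogonal projection of `μ_i` onto `W^u` for `i ∈ F^u`. -/
def mup (p : OrderedPartition I ttl) (mu : I → V) (i : I) : V :=
  (Submodule.orthogonalProjectionOnto (p.Wspace mu (p.partIdx i)) (mu i) : V)

/-- The characteristic function `φ_𝔭^Λ(H)`. -/
def phi (p : OrderedPartition I ttl) (lam mu : I → V) (Λ H : V) : ℤ :=
  if ∀ i ∈ ttl,
      (0 < ⟪p.mup mu i, Λ⟫ → ⟪p.lamp lam mu i, H⟫ ≤ 0) ∧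
      (⟪p.mup mu i, Λ⟫ ≤ 0 → 0 < ⟪p.lamp lam mu i, H⟫)
  then 1 else 0

/-- The characteristic function `ψ_𝔭^Λ(H)`. -/
def psi (p : OrderedPartition I ttl) (lam mu : I → V) (Λ H : V) : ℤ :=
  if ∀ i ∈ ttl,
      (p.partIdx i = 1 → 0 < ⟪p.lamp lam mu i, H⟫) ∧
      (p.partIdx i ≠ 1 →
        (0 < ⟪p.mup mu i, Λ⟫ → ⟪p.lamp lam mu i, H⟫ ≤ 0) ∧
        (⟪p.mup mu i, Λ⟫ ≤ 0 → 0 < ⟪p.lamp lam mu i, H⟫))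
  then 1 else 0

/-- `b_𝔭^Λ = #{i : ⟪μ_{𝔭,i}, Λ⟫ ≤ 0}`. -/
def bpart (p : OrderedPartition I ttl) (mu : I → V) (Λ : V) : ℕ :=
  (ttl.filter fun i => ⟪p.mup mu i, Λ⟫ ≤ 0).card

/-- `c_𝔭^Λ = #{i ∉ F¹ : ⟪μ_{𝔭,i}, Λ⟫ ≤ 0}`. -/
def cpart (p : OrderedPartition I ttl) (mu : I → V) (Λ : V) : ℕ :=
  (ttl.filter fun i => p.partIdx i ≠ 1 ∧ ⟪p.mup mu i, Λ⟫ ≤ 0).card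

/-- `α_𝔭^Λ = b_𝔭^Λ + Σ_{u=1}^{r} (a^u + 1)`. -/
def alphaP (p : OrderedPartition I ttl) (mu : I → V) (Λ : V) : ℕ :=
  p.bpart mu Λ + ∑ u : Fin p.r, ((p.F u).card + 1)

/-- `β_𝔭^Λ = 1 + c_𝔭^Λ + Σ_{u=2}^{r} (a^u + 1)`. -/
def betaP (p : OrderedPartition I ttl) (mu : I → V) (Λ : V) : ℕ :=
  1 + p.cpart mu Λ + ∑ u : Fin p.r, if 1 ≤ (u : ℕ) then (p.F u).card + 1 else 0

end OrderedPartition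

/-- `μ'_i`, the orthogonal projection of `μ_i` onto `V' = span{λ_j : j ∈ J}`; for `i ∈ J` these
form the basis of `V'` dual to `(λ_i)_{i∈J}`. -/
noncomputable def muSub {V : Type*} [NormedAddCommGroup V] [InnerProductSpace ℝ V]
    [FiniteDimensional ℝ V] {I : Type*} (lam mu : I → V) (J : Finset I) (i : I) : V :=
  (Submodule.orthogonalProjectionOnto (Submodule.span ℝ (lam '' ↑J)) (mu i) : V)

-- ### auxiliary lemmas
set_option linter.unusedSectionVars false

namespace OrderedPartition

variable {V : Type*} [NormedAddCommGroup V] [InnerProductSpace ℝ V] [FiniteDimensional ℝ V]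
variable {I : Type*} [Fintype I] [DecidableEq I] {ttl : Finset I}

lemma mem_Epart (p : OrderedPartition I ttl) {i : I} {v : ℕ} :
    i ∈ p.Epart v ↔ ∃ u : Fin p.r, (u : ℕ) < v ∧ i ∈ p.F u := by
  simp only [Epart, Finset.mem_biUnion, Finset.mem_univ, true_and]
  constructor
  · rintro ⟨u, hu⟩
    by_cases h : (u : ℕ) < v
    · exact ⟨u, h, by simpa [h] using hu⟩
    · simp [h] at hu
  · rintro ⟨u, h1, h2⟩
    exact ⟨u, by simp [h1, h2]⟩

lemma partIdx_eq (p : OrderedPartition I ttl) {u : Fin p.r} {i : I} (hi : i ∈ p.F u) :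
    p.partIdx i = (u : ℕ) + 1 := by
  unfold partIdx
  rw [Finset.sum_eq_single u]
  · simp [hi]
  · intro v _ hvu
    simp only [ite_eq_right_iff]
    intro hiv
    exact absurd hi (Finset.disjoint_left.1 (p.disj v u hvu) hiv)
  · simp

lemma exists_mem_F (p : OrderedPartition I ttl) {i : I} (hi : i ∈ ttl) :
    ∃ u : Fin p.r, i ∈ p.F u := by
  rw [← p.covers] at hi
  simpa using Finset.mem_biUnion.1 hi

lemma Uspace_mono (p : OrderedPartition I ttl) (mu : I → V) {v w : ℕ} (h : v ≤ w) :
    p.Uspace mu v ≤ p.Uspace mu w := by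
  apply Submodule.span_mono
  apply Set.image_mono
  intro i hi
  rw [Finset.mem_coe, mem_Epart] at *
  obtain ⟨u, h1, h2⟩ := hi
  exact ⟨u, h1.trans_le h, h2⟩

lemma Uspace_zero (p : OrderedPartition I ttl) (mu : I → V) : p.Uspace mu 0 = ⊥ := by
  have : p.Epart 0 = ∅ := by ext i; simp [mem_Epart]
  simp [Uspace, this]

lemma mem_Uspace (p : OrderedPartition I ttl) (mu : I → V) {i : I} {v : ℕ}
    (hi : i ∈ p.Epart v) : mu i ∈ p.Uspace mu v :=
  Submodule.subset_span (Set.mem_image_of_mem _ hi)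

end OrderedPartition

lemma proj_congr {V : Type*} [NormedAddCommGroup V] [InnerProductSpace ℝ V]
    [FiniteDimensional ℝ V] {K L : Submodule ℝ V} (h : K = L) (x : V) :
    (Submodule.orthogonalProjectionOnto K x : V) = Submodule.orthogonalProjectionOnto L x := by subst h; rfl

/-- Section 4, formulas (⋆⋆): with `𝔭`, `𝔮` as above and
`b_{F¹}^Λ = #{i ∈ F¹ : ⟪μ_i, Λ⟫ ≤ 0}`, one has `b_𝔭^Λ = b_{F¹}^Λ + b_𝔮^Λ` and
`α_𝔭^Λ = α_𝔮^Λ + |F¹| + 1 + b_{F¹}^Λ`. -/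
theorem tail_partition_starstar_formulas
    {V : Type*} [NormedAddCommGroup V] [InnerProductSpace ℝ V] [FiniteDimensional ℝ V]
    {I : Type*} [Fintype I] [DecidableEq I] [Nonempty I]
    (b : Module.Basis I ℝ V) (mu : I → V)
    (hmu : ∀ i j : I, ⟪mu i, b j⟫ = if i = j then 1 else 0)
    (p : OrderedPartition I (Finset.univ : Finset I)) (hr2 : 2 ≤ p.r)
    (J : Finset I) (hJ : J = Finset.univ \ p.F ⟨0, by omega⟩)
    (q : OrderedPartition I J) (hqr : q.r + 1 = p.r)
    (hqF : ∀ v : Fin q.r, q.F v = p.F ⟨(v : ℕ) + 1, by have := v.isLt; omega⟩)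
    (Λ : V) :
    p.bpart mu Λ
      = ((p.F ⟨0, by omega⟩).filter fun i => ⟪mu i, Λ⟫ ≤ 0).card
        + q.bpart (muSub (⇑b) mu J) Λ
    ∧ p.alphaP mu Λ
      = q.alphaP (muSub (⇑b) mu J) Λ + (p.F ⟨0, by omega⟩).card + 1
        + ((p.F ⟨0, by omega⟩).filter fun i => ⟪mu i, Λ⟫ ≤ 0).card := by
  have hp0 : 0 < p.r := by omega
  set F0 : Finset I := p.F ⟨0, by omega⟩ with hF0def
  set mu' : I → V := muSub (⇑b) mu J with hmu'def
  set U1 : Submodule ℝ V := Submodule.span ℝ (mu '' ↑F0) with hU1def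
  -- basic combinatorics
  have hiJ : ∀ i : I, i ∈ J ↔ i ∉ F0 := by
    intro i; rw [hJ]; simp [hF0def]
  have hdisjF0J : Disjoint F0 J := by
    rw [Finset.disjoint_left]; intro i hi hiJ'
    exact ((hiJ i).1 hiJ') hi
  have hunion : F0 ∪ J = Finset.univ := by
    ext i; simp only [Finset.mem_union, Finset.mem_univ, iff_true]
    by_cases h : i ∈ F0
    · exact Or.inl h
    · exact Or.inr ((hiJ i).2 h)
  -- Epart facts
  have hE1 : p.Epart 1 = F0 := by
    ext i
    rw [OrderedPartition.mem_Epart]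
    constructor
    · rintro ⟨u, hu, hi⟩
      have : u = ⟨0, hp0⟩ := Fin.ext (show (u : ℕ) = 0 by omega)
      rwa [this] at hi
    · intro hi
      exact ⟨⟨0, hp0⟩, Nat.zero_lt_one, hi⟩
  have hU1eq : p.Uspace mu 1 = U1 := by
    rw [OrderedPartition.Uspace, hE1]
  have hEsucc : ∀ v : ℕ, p.Epart (v + 1) = F0 ∪ q.Epart v := by
    intro v
    ext i
    rw [OrderedPartition.mem_Epart, Finset.mem_union, OrderedPartition.mem_Epart]
    constructor
    · rintro ⟨u, hu, hi⟩
      by_cases h0 : (u : ℕ) = 0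
      · left
        have : u = ⟨0, hp0⟩ := Fin.ext (show (u : ℕ) = 0 by omega)
        rwa [this] at hi
      · right
        have hlt : (u : ℕ) - 1 < q.r := by have := u.isLt; omega
        refine ⟨⟨(u : ℕ) - 1, hlt⟩, by simp; omega, ?_⟩
        rw [hqF]
        have : (⟨(u : ℕ) - 1 + 1, by omega⟩ : Fin p.r) = u :=
          Fin.ext (show (u : ℕ) - 1 + 1 = (u : ℕ) by omega)
        rwa [this]
    · rintro (hi | ⟨w, hw, hi⟩)
      · exact ⟨⟨0, hp0⟩, Nat.succ_pos v, hi⟩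
      · refine ⟨⟨(w : ℕ) + 1, by have := w.isLt; omega⟩, by simp; omega, ?_⟩
        rw [hqF w] at hi
        exact hi
  -- linear independence of mu
  have hmuli : LinearIndependent ℝ mu := by
    rw [Fintype.linearIndependent_iff]
    intro g hg j
    have : ⟪∑ i, g i • mu i, b j⟫ = g j := by
      rw [sum_inner]
      simp only [real_inner_smul_left, hmu]
      simp [Finset.sum_ite_eq']
    rw [hg] at this
    simpa using this.symm
  -- V' = U1ᗮ
  have hV' : Submodule.span ℝ (⇑b '' ↑J) = U1ᗮ := by
    have hle : Submodule.span ℝ (⇑b '' ↑J) ≤ U1ᗮ := by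
      rw [Submodule.span_le]
      rintro _ ⟨j, hj, rfl⟩
      rw [SetLike.mem_coe, Submodule.mem_orthogonal]
      intro u hu
      induction hu using Submodule.span_induction with
      | mem x hx =>
          obtain ⟨i, hi, rfl⟩ := hx
          rw [hmu i j, if_neg]
          rintro rfl
          exact ((hiJ i).1 hj) hi
      | zero => simp
      | add x y hx hy ihx ihy => rw [inner_add_left, ihx, ihy, add_zero]
      | smul a x hx ihx => rw [real_inner_smul_left, ihx, mul_zero]
    apply Submodule.eq_of_le_of_finrank_eq hle
    have h1 : Module.finrank ℝ (Submodule.span ℝ (⇑b '' ↑J)) = J.card := by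
      rw [Set.image_eq_range]
      have := finrank_span_eq_card (R := ℝ)
        (b.linearIndependent.comp ((↑) : {x // x ∈ J} → I) Subtype.coe_injective)
      rw [Fintype.card_coe] at this
      exact this
    have h2 : Module.finrank ℝ U1 = F0.card := by
      rw [hU1def, Set.image_eq_range]
      have := finrank_span_eq_card (R := ℝ)
        (hmuli.comp ((↑) : {x // x ∈ F0} → I) Subtype.coe_injective)
      rw [Fintype.card_coe] at this
      exact this
    have h3 : Module.finrank ℝ U1 + Module.finrank ℝ U1ᗮ = Module.finrank ℝ V :=
      Submodule.finrank_add_finrank_orthogonal U1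
    have h4 : Module.finrank ℝ V = Fintype.card I := Module.finrank_eq_card_basis b
    have h5 : F0.card + J.card = Fintype.card I := by
      have := Finset.card_union_of_disjoint hdisjF0J
      rw [hunion] at this
      simpa [Finset.card_univ] using this.symm
    omega
  have hmu'proj : ∀ i : I, mu' i = (Submodule.orthogonalProjectionOnto U1ᗮ (mu i) : V) := by
    intro i
    rw [hmu'def]
    exact proj_congr hV' (mu i)
  -- Uspace relation
  have hUq : ∀ v : ℕ, q.Uspace mu' v = p.Uspace mu (v + 1) ⊓ U1ᗮ := by
    intro v
    apply le_antisymm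
    · rw [OrderedPartition.Uspace, Submodule.span_le]
      rintro _ ⟨j, hj, rfl⟩
      rw [Finset.mem_coe] at hj
      constructor
      · -- mu' j ∈ p.Uspace mu (v+1)
        have hproj : (Submodule.orthogonalProjectionOnto U1 (mu j) : V) + (Submodule.orthogonalProjectionOnto U1ᗮ (mu j) : V)
            = mu j := Submodule.starProjection_add_starProjection_orthogonal (K := U1) (mu j)
        have h1 : mu j ∈ p.Uspace mu (v + 1) := by
          apply OrderedPartition.mem_Uspace
          rw [hEsucc v, Finset.mem_union]
          exact Or.inr hj
        have h2 : (Submodule.orthogonalProjectionOnto U1 (mu j) : V) ∈ p.Uspace mu (v + 1) := by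
          have : U1 ≤ p.Uspace mu (v + 1) := by
            rw [← hU1eq]; exact p.Uspace_mono mu (by omega)
          exact this (Submodule.orthogonalProjectionOnto U1 (mu j)).2
        rw [hmu'proj j, SetLike.mem_coe]
        have : (Submodule.orthogonalProjectionOnto U1ᗮ (mu j) : V)
            = mu j - (Submodule.orthogonalProjectionOnto U1 (mu j) : V) := by
          rw [eq_sub_iff_add_eq, add_comm]; exact hproj
        rw [this]
        exact Submodule.sub_mem _ h1 h2
      · rw [hmu'proj j, SetLike.mem_coe]
        exact (Submodule.orthogonalProjectionOnto U1ᗮ (mu j)).2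
    · rintro x ⟨hx1, hx2⟩
      have hxeq : (Submodule.orthogonalProjectionOnto U1ᗮ x : V) = x :=
        Submodule.starProjection_eq_self_iff.2 hx2
      have key : ∀ y ∈ p.Uspace mu (v + 1),
          (Submodule.orthogonalProjectionOnto U1ᗮ y : V) ∈ q.Uspace mu' v := by
        intro y hy
        induction hy using Submodule.span_induction with
        | mem z hz =>
            obtain ⟨j, hj, rfl⟩ := hz
            rw [Finset.mem_coe, hEsucc v, Finset.mem_union] at hj
            rcases hj with hj | hj
            · have : Submodule.orthogonalProjectionOnto U1ᗮ (mu j) = 0 :=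
                Submodule.orthogonalProjectionOnto_orthogonal_apply_eq_zero
                  (Submodule.subset_span (Set.mem_image_of_mem _ hj))
              rw [this]
              simp
            · rw [← hmu'proj j]
              exact OrderedPartition.mem_Uspace q mu' hj
        | zero => simp
        | add z w hz hw ihz ihw => rw [map_add]; exact Submodule.add_mem _ ihz ihw
        | smul a z hz ihz =>
            rw [map_smul]
            exact Submodule.smul_mem _ a ihz
      have := key x hx1
      rwa [hxeq] at this
  -- Wspace relation
  have hWq : ∀ v : ℕ, 1 ≤ v → q.Wspace mu' v = p.Wspace mu (v + 1) := by
    intro v hv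
    have h1 := hUq v
    have h2 : q.Uspace mu' (v - 1) = p.Uspace mu v ⊓ U1ᗮ := by
      have := hUq (v - 1)
      rwa [Nat.sub_add_cancel hv] at this
    have hU1le : U1 ≤ p.Uspace mu v := by
      rw [← hU1eq]; exact p.Uspace_mono mu (by omega)
    have hdecomp : U1 ⊔ U1ᗮ ⊓ p.Uspace mu v = p.Uspace mu v :=
      Submodule.sup_orthogonal_inf_of_hasOrthogonalProjection hU1le
    rw [OrderedPartition.Wspace, OrderedPartition.Wspace, h1, h2]
    have hv1 : v + 1 - 1 = v := by omega
    rw [hv1]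
    apply le_antisymm
    · intro x hx
      simp only [Submodule.mem_inf, SetLike.mem_coe] at hx ⊢
      obtain ⟨⟨hxA, hxperp1⟩, hxperp2⟩ := hx
      refine ⟨hxA, ?_⟩
      rw [Submodule.mem_orthogonal]
      intro u hu
      rw [← hdecomp] at hu
      obtain ⟨a, ha, c, hc, rfl⟩ := Submodule.mem_sup.1 hu
      rw [inner_add_left]
      have h1' : ⟪a, x⟫ = 0 := (Submodule.mem_orthogonal _ _).1 hxperp1 a ha
      have h2' : ⟪c, x⟫ = 0 := by
        apply (Submodule.mem_orthogonal _ _).1 hxperp2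
        exact ⟨hc.2, hc.1⟩
      rw [h1', h2', add_zero]
    · intro x hx
      simp only [Submodule.mem_inf, SetLike.mem_coe] at hx ⊢
      obtain ⟨hxA, hxperp⟩ := hx
      exact ⟨⟨hxA, Submodule.orthogonal_le hU1le hxperp⟩,
        Submodule.orthogonal_le inf_le_left hxperp⟩
  -- mup on F0
  have hmupF0 : ∀ i ∈ F0, p.mup mu i = mu i := by
    intro i hi
    have hidx : p.partIdx i = 1 := p.partIdx_eq (u := ⟨0, hp0⟩) hi
    have hW1 : p.Wspace mu 1 = p.Uspace mu 1 := by
      rw [OrderedPartition.Wspace]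
      norm_num [p.Uspace_zero mu, Submodule.bot_orthogonal_eq_top]
    have hid : p.mup mu i = (Submodule.orthogonalProjectionOnto (p.Wspace mu 1) (mu i) : V) := by
      rw [OrderedPartition.mup]
      exact proj_congr (congrArg (p.Wspace mu) hidx) (mu i)
    rw [hid, proj_congr hW1 (mu i)]
    apply Submodule.starProjection_eq_self_iff.2
    apply OrderedPartition.mem_Uspace
    rw [hE1]
    exact hi
  -- mup on J
  have hmupJ : ∀ i ∈ J, q.mup mu' i = p.mup mu i := by
    intro i hi
    obtain ⟨w, hw⟩ := q.exists_mem_F hi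
    have hqidx : q.partIdx i = (w : ℕ) + 1 := q.partIdx_eq hw
    have hpidx : p.partIdx i = (w : ℕ) + 2 := by
      have : i ∈ p.F ⟨(w : ℕ) + 1, by have := w.isLt; omega⟩ := by
        rw [← hqF w]; exact hw
      have := p.partIdx_eq this
      simpa using this
    have hWle : q.Wspace mu' ((w : ℕ) + 1) ≤ U1ᗮ := by
      rw [OrderedPartition.Wspace]
      refine le_trans inf_le_left ?_
      rw [hUq]
      exact inf_le_right
    have e1 : q.mup mu' i = (Submodule.orthogonalProjectionOnto (q.Wspace mu' ((w : ℕ) + 1)) (mu' i) : V) := by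
      rw [OrderedPartition.mup]
      exact proj_congr (congrArg (q.Wspace mu') hqidx) _
    have e2 : p.mup mu i = (Submodule.orthogonalProjectionOnto (p.Wspace mu ((w : ℕ) + 2)) (mu i) : V) := by
      rw [OrderedPartition.mup]
      exact proj_congr (congrArg (p.Wspace mu) hpidx) _
    have hVle : q.Wspace mu' ((w : ℕ) + 1) ≤ Submodule.span ℝ (⇑b '' ↑J) := by
      rw [hV']; exact hWle
    rw [e1, e2]
    calc (Submodule.orthogonalProjectionOnto (q.Wspace mu' ((w : ℕ) + 1)) (mu' i) : V)
        = (Submodule.orthogonalProjectionOnto (q.Wspace mu' ((w : ℕ) + 1)) (mu i) : V) := by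
          have hmm : mu' i
              = (Submodule.orthogonalProjectionOnto (Submodule.span ℝ (⇑b '' ↑J)) (mu i) : V) := rfl
          rw [hmm]
          exact congrArg _ (Submodule.orthogonalProjectionOnto_starProjection_of_le hVle (mu i))
      _ = (Submodule.orthogonalProjectionOnto (p.Wspace mu ((w : ℕ) + 2)) (mu i) : V) :=
          proj_congr (hWq ((w : ℕ) + 1) (by omega)) (mu i)
  -- now the counting
  have hbsplit : p.bpart mu Λ
      = (F0.filter fun i => ⟪mu i, Λ⟫ ≤ 0).card + q.bpart mu' Λ := by
    have hfil : (Finset.univ.filter fun i => ⟪p.mup mu i, Λ⟫ ≤ 0)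
        = ((F0 ∪ J).filter fun i => ⟪p.mup mu i, Λ⟫ ≤ 0) := by rw [hunion]
    rw [OrderedPartition.bpart, hfil, Finset.filter_union,
      Finset.card_union_of_disjoint (Finset.disjoint_filter_filter hdisjF0J)]
    congr 1
    · congr 1
      apply Finset.filter_congr
      intro i hi
      rw [hmupF0 i hi]
    · rw [OrderedPartition.bpart]
      congr 1
      apply Finset.filter_congr
      intro i hi
      rw [hmupJ i hi]
  refine ⟨hbsplit, ?_⟩
  -- alpha formula
  have hsum : ∑ u : Fin p.r, ((p.F u).card + 1)
      = (F0.card + 1) + ∑ v : Fin q.r, ((q.F v).card + 1) := by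
    have hs := Fintype.sum_equiv (finCongr hqr)
      (fun u : Fin (q.r + 1) => (p.F (finCongr hqr u)).card + 1)
      (fun u : Fin p.r => (p.F u).card + 1) (fun _ => rfl)
    rw [← hs, Fin.sum_univ_succ]
    congr 1
    refine Finset.sum_congr rfl fun v _ => ?_
    rw [hqF v]
    exact congrArg (fun z : Fin p.r => (p.F z).card + 1) (Fin.ext (by simp))
  rw [OrderedPartition.alphaP, OrderedPartition.alphaP, hbsplit, hsum]
  omega
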